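/- arXiv:1312.1609 — 7 statements merged into one kernel-verified Lean document; each statement's English description precedes it below -/
import Mathlib

section
/- If polynomials P and Q satisfy the composition condition on [a,b] — i.e. there exist polynomials P̃, Q̃ and W with W(a) = W(b) such that P = P̃ ∘ W and Q = Q̃ ∘ W — then for every nonnegative integer i, the moment m_i = ∫_a^b P(x)^i · Q'(x) dx vanishes. -/
open Polynomial intervalIntegral

lemma exists_antideriv (p : Polynomial ℝ) : ∃ F : Polynomial ℝ, Polynomial.derivative F = p := by
  induction p using Polynomial.induction_on' with
  | add p q hp hq =>
    obtain ⟨F, hF⟩ := hp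
    obtain ⟨G, hG⟩ := hq
    exact ⟨F + G, by simp [hF, hG]⟩
  | monomial n a =>
    refine ⟨Polynomial.C (a / (n + 1)) * Polynomial.X ^ (n + 1), ?_⟩
    rw [Polynomial.derivative_C_mul, Polynomial.derivative_X_pow]
    simp only [Nat.add_sub_cancel]
    rw [← mul_assoc, ← Polynomial.C_mul,
      show a / (n + 1) * (((n + 1 : ℕ) : ℝ)) = a by push_cast; field_simp,
      Polynomial.C_mul_X_pow_eq_monomial]

lemma integral_derivative_eval (G : Polynomial ℝ) (a b : ℝ) :
    ∫ x in a..b, (Polynomial.derivative G).eval x = G.eval b - G.eval a := by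
  exact intervalIntegral.integral_eq_sub_of_hasDerivAt (fun x _ => G.hasDerivAt x)
    ((Polynomial.derivative G).continuous_aeval.intervalIntegrable a b)

theorem moments_vanish_of_composition_condition
    (a b : ℝ) (hab : a ≠ b)
    (P Q Pt Qt W : Polynomial ℝ)
    (hW : W.eval a = W.eval b)
    (hP : P = Pt.comp W) (hQ : Q = Qt.comp W) :
    ∀ i : ℕ, ∫ x in a..b, (P.eval x) ^ i * (Polynomial.derivative Q).eval x = 0 := by
  intro i
  obtain ⟨F, hF⟩ := exists_antideriv (Pt ^ i * Polynomial.derivative Qt)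
  have key : ∀ x : ℝ, (P.eval x) ^ i * (Polynomial.derivative Q).eval x
      = (Polynomial.derivative (F.comp W)).eval x := by
    intro x
    rw [Polynomial.derivative_comp, hF, hP, hQ, Polynomial.derivative_comp]
    simp [Polynomial.eval_comp]
    ring
  simp_rw [key]
  rw [integral_derivative_eval]
  simp [Polynomial.eval_comp, hW]
end

section
/- Let d₁, d₂ > 1 be coprime integers. Let P(θ) be a finite linear combination of cos(k d₁ θ) and sin(k d₁ θ) over k ≥ 0 with coefficients vanishing whenever d₂ divides k (k ≥ 1), and let Q(θ) be a finite linear combination of cos(l d₂ θ) and sin(l d₂ θ) with coefficients vanishing whenever d₁ divides l (l ≥ 1). Then ∫_0^{2π} P(θ)^i Q'(θ) dθ = 0 for all i ≥ 0. -/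
/-!
Every term of `P` has a frequency divisible by `d₁`, so `P ^ i` is `2π / d₁`-periodic. Every term
of `Q'` has frequency `l d₂` with `d₁ ∤ l`, hence, by coprimality, not divisible by `d₁`. If `g`
is `2π / d`-periodic and `d ∤ q`, then shifting the variable by `2π / d` multiplies
`∫₀^{2π} g(θ) e^{iqθ} dθ` by `e^{2πiq/d} ≠ 1`, so this integral vanishes, and with it the integral
of `g` against every real combination of `cos (qθ)` and `sin (qθ)`.
-/

open Real intervalIntegral Function

theorem cexp_mul_two_pi_div_ne_one {d : ℕ} (hd : d ≠ 0) {q : ℤ} (hq : ¬ (d : ℤ) ∣ q) :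
    Complex.exp (q * ↑(2 * π / d) * Complex.I) ≠ 1 := by
  rw [Ne, Complex.exp_eq_one_iff]
  rintro ⟨n, hn⟩
  have hC : (q : ℂ) * ↑(2 * π / d) = n * ↑(2 * π) :=
    mul_right_cancel₀ Complex.I_ne_zero (by rw [hn]; push_cast; ring)
  have hR : (q : ℝ) * (2 * π / d) = n * (2 * π) := by exact_mod_cast hC
  have : (q : ℝ) = d * n := by
    field_simp at hR
    nlinarith [pi_pos]
  exact hq ⟨n, by exact_mod_cast this⟩

theorem integral_mul_cexp_eq_zero_of_periodic {d : ℕ} (hd : d ≠ 0) {q : ℤ}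
    (hq : ¬ (d : ℤ) ∣ q) {g : ℝ → ℂ} (hg : Periodic g (2 * π / d)) :
    ∫ θ in (0 : ℝ)..2 * π, g θ * Complex.exp (q * θ * Complex.I) = 0 := by
  set F : ℝ → ℂ := fun θ => g θ * Complex.exp (q * θ * Complex.I)
  set ζ := Complex.exp (q * ↑(2 * π / d) * Complex.I)
  have hF : Periodic F (2 * π) := by
    intro θ
    have hg' := hg.nat_mul d θ
    rw [mul_div_cancel₀ _ (Nat.cast_ne_zero.mpr hd)] at hg'
    simp only [F, hg', Complex.ofReal_add, mul_add, add_mul, Complex.exp_add]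
    rw [show (q : ℂ) * ↑(2 * π) * Complex.I = q * (2 * π * Complex.I) by push_cast; ring,
      Complex.exp_int_mul_two_pi_mul_I, mul_one]
  have hshift : ∀ θ, F (θ + 2 * π / d) = ζ * F θ := by
    intro θ
    simp only [F, ζ, hg θ, Complex.ofReal_add, mul_add, add_mul, Complex.exp_add]
    ring
  have hfix : ∫ θ in (0 : ℝ)..2 * π, F θ = ζ * ∫ θ in (0 : ℝ)..2 * π, F θ := calc
    ∫ θ in (0 : ℝ)..2 * π, F θ = ∫ θ in (2 * π / d)..(2 * π / d) + 2 * π, F θ := by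
      rw [hF.intervalIntegral_add_eq _ 0, zero_add]
    _ = ∫ θ in (0 : ℝ)..2 * π, F (θ + 2 * π / d) := by
      rw [integral_comp_add_right, zero_add, add_comm]
    _ = ζ * ∫ θ in (0 : ℝ)..2 * π, F θ := by simp_rw [hshift, integral_const_mul]
  have hζ : ζ - 1 ≠ 0 := sub_ne_zero.mpr (cexp_mul_two_pi_div_ne_one hd hq)
  exact (mul_eq_zero.mp (by linear_combination -hfix : (ζ - 1) * _ = 0)).resolve_left hζ

theorem mul_cos_add_mul_sin_eq_re (x α β : ℝ) (q : ℤ) (θ : ℝ) :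
    x * (α * cos (q * θ) + β * sin (q * θ)) =
      RCLike.re ((α - β * Complex.I) * x * Complex.exp (q * θ * Complex.I)) := by
  rw [show (q : ℂ) * θ = ((q * θ : ℝ) : ℂ) by push_cast; ring, Complex.exp_mul_I,
    ← Complex.ofReal_cos, ← Complex.ofReal_sin]
  simp only [RCLike.re_to_complex, Complex.mul_re, Complex.mul_im, Complex.sub_re,
    Complex.sub_im, Complex.add_re, Complex.add_im, Complex.ofReal_re, Complex.ofReal_im,
    Complex.I_re, Complex.I_im]
  ring

theorem integral_mul_trig_eq_zero_of_periodic {d : ℕ} (hd : d ≠ 0) {q : ℤ}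
    (hq : ¬ (d : ℤ) ∣ q) {g : ℝ → ℝ} (hg : Periodic g (2 * π / d))
    (hgi : IntervalIntegrable g MeasureTheory.volume 0 (2 * π)) (α β : ℝ) :
    ∫ θ in (0 : ℝ)..2 * π, g θ * (α * cos (q * θ) + β * sin (q * θ)) = 0 := by
  have hgi' : IntervalIntegrable (fun θ => (g θ : ℂ)) MeasureTheory.volume 0 (2 * π) :=
    ⟨hgi.1.ofReal, hgi.2.ofReal⟩
  have hperiodic : Periodic (fun θ => (α - β * Complex.I) * g θ) (2 * π / d) := fun θ => by
    simp only [hg θ]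
  simp_rw [mul_cos_add_mul_sin_eq_re]
  rw [intervalIntegral_re ((hgi'.const_mul _).mul_continuousOn (by fun_prop)),
    integral_mul_cexp_eq_zero_of_periodic hd hq hperiodic, map_zero]

theorem periodic_sum_cos_sin_nat_mul (d : ℕ) (s : Finset ℕ) (a b : ℕ → ℝ) :
    Periodic (fun θ => ∑ k ∈ s, (a k * cos (k * d * θ) + b k * sin (k * d * θ)))
      (2 * π / d) := by
  rcases eq_or_ne d 0 with rfl | hd
  · simp [Periodic]
  intro θ
  have hshift (k : ℕ) : (k : ℝ) * d * (θ + 2 * π / d) = k * d * θ + k * (2 * π) := by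
    field_simp
  simp only [hshift, cos_add_nat_mul_two_pi, sin_add_nat_mul_two_pi]

theorem integral_mul_sin_add_cos_eq_zero_of_coprime {d₁ d₂ l : ℕ} (hd₁ : d₁ ≠ 0)
    (hcop : Nat.Coprime d₁ d₂) (hl : ¬ d₁ ∣ l) {g : ℝ → ℝ} (hg : Periodic g (2 * π / d₁))
    (hgi : IntervalIntegrable g MeasureTheory.volume 0 (2 * π)) (α β : ℝ) :
    ∫ θ in (0 : ℝ)..2 * π, g θ * (α * sin (l * d₂ * θ) + β * cos (l * d₂ * θ)) = 0 := by
  have hq : ¬ (d₁ : ℤ) ∣ ((l * d₂ : ℕ) : ℤ) := by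
    rw [Int.natCast_dvd_natCast]
    exact fun h => hl (hcop.dvd_of_dvd_mul_right h)
  have horth := integral_mul_trig_eq_zero_of_periodic hd₁ hq hg hgi β α
  push_cast at horth
  rw [← horth]
  congr 1 with θ
  ring

theorem trig_moments_vanish_coprime_frequencies_general
    (d₁ d₂ : ℕ) (hd₁ : 1 < d₁) (hcop : Nat.Coprime d₁ d₂)
    (r₁ r₂ : ℕ) (a b c f : ℕ → ℝ)
    (hQ : ∀ l, 1 ≤ l → d₁ ∣ l → c l = 0 ∧ f l = 0) :
    ∀ i : ℕ,
      ∫ θ in (0:ℝ)..(2 * π),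
        (∑ k ∈ Finset.range (r₁ + 1),
            (a k * Real.cos (k * d₁ * θ) + b k * Real.sin (k * d₁ * θ))) ^ i *
        (∑ l ∈ Finset.range (r₂ + 1),
            (-(c l) * (l * d₂) * Real.sin (l * d₂ * θ)
              + f l * (l * d₂) * Real.cos (l * d₂ * θ))) = 0 := by
  intro i
  set G := fun θ : ℝ => (∑ k ∈ Finset.range (r₁ + 1),
    (a k * Real.cos (k * d₁ * θ) + b k * Real.sin (k * d₁ * θ))) ^ i
  have hG : Periodic G (2 * π / d₁) := (periodic_sum_cos_sin_nat_mul d₁ _ a b).comp (· ^ i)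
  have hGi : IntervalIntegrable G MeasureTheory.volume 0 (2 * π) :=
    (by fun_prop : Continuous G).intervalIntegrable _ _
  have hterm : ∀ l ∈ Finset.range (r₂ + 1), ∫ θ in (0:ℝ)..(2 * π), G θ *
      (-(c l) * (l * d₂) * sin (l * d₂ * θ) + f l * (l * d₂) * cos (l * d₂ * θ)) = 0 := by
    intro l _
    by_cases hl : d₁ ∣ l
    · obtain rfl | hl₀ := Nat.eq_zero_or_pos l
      · simp
      · obtain ⟨hc, hf⟩ := hQ l hl₀ hl
        simp [hc, hf]
    · exact integral_mul_sin_add_cos_eq_zero_of_coprime (by omega) hcop hl hG hGi _ _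
  show ∫ θ in (0:ℝ)..(2 * π), G θ * _ = 0
  simp_rw [Finset.mul_sum]
  rw [integral_finsetSum fun l _ => (by fun_prop : Continuous _).intervalIntegrable _ _]
  exact Finset.sum_eq_zero hterm

theorem trig_moments_vanish_coprime_frequencies
    (d₁ d₂ : ℕ) (hd₁ : 1 < d₁) (hd₂ : 1 < d₂) (hcop : Nat.Coprime d₁ d₂)
    (r₁ r₂ : ℕ) (a b c f : ℕ → ℝ)
    (hP : ∀ k, 1 ≤ k → d₂ ∣ k → a k = 0 ∧ b k = 0)
    (hQ : ∀ l, 1 ≤ l → d₁ ∣ l → c l = 0 ∧ f l = 0) :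
    ∀ i : ℕ,
      ∫ θ in (0:ℝ)..(2 * π),
        (∑ k ∈ Finset.range (r₁ + 1),
            (a k * Real.cos (k * d₁ * θ) + b k * Real.sin (k * d₁ * θ))) ^ i *
        (∑ l ∈ Finset.range (r₂ + 1),
            (-(c l) * (l * d₂) * Real.sin (l * d₂ * θ)
              + f l * (l * d₂) * Real.cos (l * d₂ * θ))) = 0 :=
  trig_moments_vanish_coprime_frequencies_general d₁ d₂ hd₁ hcop r₁ r₂ a b c f hQ
end

section
/- Let d₁ be odd and d₂ coprime to d₁, both greater than 1. Then there do not exist real polynomials P̃, Q̃ and a nonconstant real trigonometric polynomial W with W(0) = W(2π) such that cos(d₁θ) = P̃(W(θ)) and sin(d₂θ) = Q̃(W(θ)), because the derivatives of cos(d₁θ) and sin(d₂θ), viewed as entire functions of a complex variable θ, have no common zero. -/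
/-!
By Rolle's theorem the trigonometric polynomial `W`, having `W 0 = W (2π)`, has a real critical
point `c`. Both `cos (d₁ θ) = P̃ (W θ)` and `sin (d₂ θ) = Q̃ (W θ)` are then critical at `c`, so
`sin (d₁ c) = 0` and `cos (d₂ c) = 0`, i.e. `d₁ c = m π` and `2 d₂ c = (2 l + 1) π`. Eliminating `c`
gives `2 d₂ m = d₁ (2 l + 1)`, which has an even left and, for odd `d₁`, an odd right side.
-/

open Real

theorem deriv_comp_eq_zero_of_deriv_eq_zero {𝕜 : Type*} [NontriviallyNormedField 𝕜]
    {f W : 𝕜 → 𝕜} {c : 𝕜} (hf : DifferentiableAt 𝕜 f (W c)) (hW : DifferentiableAt 𝕜 W c)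
    (hc : deriv W c = 0) : deriv (f ∘ W) c = 0 := by
  rw [deriv_comp c hf hW, hc, mul_zero]

theorem sin_mul_eq_zero_of_deriv_cos_mul_eq_zero {d c : ℝ} (hd : d ≠ 0)
    (h : deriv (fun θ => cos (d * θ)) c = 0) : sin (d * c) = 0 := by
  have hderiv : HasDerivAt (fun θ => cos (d * θ)) (-sin (d * c) * d) c := by
    simpa using ((hasDerivAt_id c).const_mul d).cos
  rw [hderiv.deriv, neg_mul, neg_eq_zero] at h
  exact (mul_eq_zero.mp h).resolve_right hd

theorem cos_mul_eq_zero_of_deriv_sin_mul_eq_zero {d c : ℝ} (hd : d ≠ 0)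
    (h : deriv (fun θ => sin (d * θ)) c = 0) : cos (d * c) = 0 := by
  have hderiv : HasDerivAt (fun θ => sin (d * θ)) (cos (d * c) * d) c := by
    simpa using ((hasDerivAt_id c).const_mul d).sin
  rw [hderiv.deriv] at h
  exact (mul_eq_zero.mp h).resolve_right hd

theorem cos_mul_ne_zero_of_sin_mul_eq_zero {d₁ : ℤ} (d₂ : ℤ) (hodd : Odd d₁) {x : ℝ}
    (h : sin (d₁ * x) = 0) : cos (d₂ * x) ≠ 0 := by
  obtain ⟨m, hm⟩ := sin_eq_zero_iff.mp h
  intro hcos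
  obtain ⟨l, hl⟩ := cos_eq_zero_iff.mp hcos
  have hreal : ((2 * d₂ * m : ℤ) : ℝ) * π = ((d₁ * (2 * l + 1) : ℤ) : ℝ) * π := by
    push_cast
    calc 2 * (d₂ : ℝ) * m * π = 2 * d₂ * (m * π) := by ring
      _ = 2 * d₁ * (d₂ * x) := by rw [hm]; ring
      _ = d₁ * (2 * l + 1) * π := by rw [hl]; ring
  have hint : 2 * d₂ * m = d₁ * (2 * l + 1) := by
    exact_mod_cast mul_right_cancel₀ pi_ne_zero hreal
  have hodd_rhs : Odd (d₁ * (2 * l + 1)) := hodd.mul (odd_two_mul_add_one l)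
  rw [← hint, mul_assoc] at hodd_rhs
  exact Int.not_odd_iff_even.mpr (even_two_mul _) hodd_rhs

theorem no_common_composition_factor_cos_sin_general
    (d₁ d₂ : ℕ) (hd₂ : 1 < d₂) (hodd : Odd d₁) :
    ¬ ∃ (Pt Qt : Polynomial ℝ) (n : ℕ) (a b : ℕ → ℝ),
        (∃ k, 1 ≤ k ∧ k ≤ n ∧ (a k ≠ 0 ∨ b k ≠ 0)) ∧
        ((∑ k ∈ Finset.range (n + 1),
            (a k * Real.cos (k * (0:ℝ)) + b k * Real.sin (k * (0:ℝ)))) =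
         (∑ k ∈ Finset.range (n + 1),
            (a k * Real.cos (k * (2 * π)) + b k * Real.sin (k * (2 * π))))) ∧
        (∀ θ : ℝ, Real.cos (d₁ * θ) =
            Pt.eval (∑ k ∈ Finset.range (n + 1),
              (a k * Real.cos (k * θ) + b k * Real.sin (k * θ)))) ∧
        (∀ θ : ℝ, Real.sin (d₂ * θ) =
            Qt.eval (∑ k ∈ Finset.range (n + 1),
              (a k * Real.cos (k * θ) + b k * Real.sin (k * θ)))) := by
  rintro ⟨Pt, Qt, n, a, b, -, hper, hP, hQ⟩
  set W : ℝ → ℝ := fun θ => ∑ k ∈ Finset.range (n + 1),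
    (a k * cos (k * θ) + b k * sin (k * θ))
  have hWdiff : Differentiable ℝ W := by fun_prop
  obtain ⟨c, -, hc⟩ := exists_deriv_eq_zero two_pi_pos hWdiff.continuous.continuousOn hper
  have hcos : deriv (fun θ => cos (d₁ * θ)) c = 0 := by
    rw [funext hP]
    exact deriv_comp_eq_zero_of_deriv_eq_zero Pt.differentiableAt (hWdiff c) hc
  have hsin : deriv (fun θ => sin (d₂ * θ)) c = 0 := by
    rw [funext hQ]
    exact deriv_comp_eq_zero_of_deriv_eq_zero Qt.differentiableAt (hWdiff c) hc
  have hd₁_ne : (d₁ : ℝ) ≠ 0 := Nat.cast_ne_zero.mpr hodd.pos.ne'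
  have hd₂_ne : (d₂ : ℝ) ≠ 0 := Nat.cast_ne_zero.mpr (by omega)
  have hsin_d₁ : sin ((d₁ : ℤ) * c) = 0 := by
    exact_mod_cast sin_mul_eq_zero_of_deriv_cos_mul_eq_zero hd₁_ne hcos
  have hcos_d₂ : cos ((d₂ : ℤ) * c) = 0 := by
    exact_mod_cast cos_mul_eq_zero_of_deriv_sin_mul_eq_zero hd₂_ne hsin
  exact cos_mul_ne_zero_of_sin_mul_eq_zero d₂ (by exact_mod_cast hodd) hsin_d₁ hcos_d₂

theorem no_common_composition_factor_cos_sin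
    (d₁ d₂ : ℕ) (hd₁ : 1 < d₁) (hd₂ : 1 < d₂) (hodd : Odd d₁)
    (hcop : Nat.Coprime d₁ d₂) :
    ¬ ∃ (Pt Qt : Polynomial ℝ) (n : ℕ) (a b : ℕ → ℝ),
        (∃ k, 1 ≤ k ∧ k ≤ n ∧ (a k ≠ 0 ∨ b k ≠ 0)) ∧
        ((∑ k ∈ Finset.range (n + 1),
            (a k * Real.cos (k * (0:ℝ)) + b k * Real.sin (k * (0:ℝ)))) =
         (∑ k ∈ Finset.range (n + 1),
            (a k * Real.cos (k * (2 * π)) + b k * Real.sin (k * (2 * π))))) ∧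
        (∀ θ : ℝ, Real.cos (d₁ * θ) =
            Pt.eval (∑ k ∈ Finset.range (n + 1),
              (a k * Real.cos (k * θ) + b k * Real.sin (k * θ)))) ∧
        (∀ θ : ℝ, Real.sin (d₂ * θ) =
            Qt.eval (∑ k ∈ Finset.range (n + 1),
              (a k * Real.cos (k * θ) + b k * Real.sin (k * θ)))) :=
  no_common_composition_factor_cos_sin_general d₁ d₂ hd₂ hodd
end

section
/- Let P(θ) = cos(3θ) and Q̃(θ) = α sin(2θ) + β cos(2θ) + γ cos(6θ) with α, β, γ ∈ ℝ. Then ∫_0^{2π} P(θ)^i Q̃'(θ) dθ = 0 and ∫_0^{2π} Q̃(θ)^i P'(θ) dθ = 0 for all i ≥ 0. -/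
/-!
Both integrals vanish by symmetry. The integrand `Q̃(θ)^i P'(θ)` changes sign under `θ ↦ θ + π`,
because `Q̃` has only even frequencies while `P' = -3 sin 3θ` has an odd one. For `P^i Q̃'`, the
sine terms of `Q̃'` are odd, so symmetrizing under `θ ↦ -θ` leaves `2α P^i cos 2θ`; the rotations by
multiples of `2π/3` fix `P = cos 3θ` and turn `cos 2θ` into three cosines summing to zero.
-/

open Real intervalIntegral Function Finset

theorem Real.cos_ofNat_mul_add_two_pi (n : ℕ) [n.AtLeastTwo] (x : ℝ) :
    cos (ofNat(n) * (x + 2 * π)) = cos (ofNat(n) * x) := by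
  rw [mul_add]
  exact cos_add_nat_mul_two_pi _ n

theorem Real.sin_ofNat_mul_add_two_pi (n : ℕ) [n.AtLeastTwo] (x : ℝ) :
    sin (ofNat(n) * (x + 2 * π)) = sin (ofNat(n) * x) := by
  rw [mul_add]
  exact sin_add_nat_mul_two_pi _ n

theorem Real.cos_ofNat_mul_add_pi (n : ℕ) [n.AtLeastTwo] (x : ℝ) :
    cos (ofNat(n) * (x + π)) = (-1) ^ n * cos (ofNat(n) * x) := by
  rw [mul_add]
  exact cos_add_nat_mul_pi _ n

theorem Real.sin_ofNat_mul_add_pi (n : ℕ) [n.AtLeastTwo] (x : ℝ) :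
    sin (ofNat(n) * (x + π)) = (-1) ^ n * sin (ofNat(n) * x) := by
  rw [mul_add]
  exact sin_add_nat_mul_pi _ n

theorem Real.cos_add_cos_add_two_pi_div_three_add_cos_add_four_pi_div_three (x : ℝ) :
    cos x + cos (x + 2 * π / 3) + cos (x + 4 * π / 3) = 0 := by
  have hsum : (x + 2 * π / 3 + (x + 4 * π / 3)) / 2 = x + π := by ring
  have hdiff : (x + 2 * π / 3 - (x + 4 * π / 3)) / 2 = -(π / 3) := by ring
  rw [add_assoc, cos_add_cos, hsum, hdiff, cos_add_pi, cos_neg, cos_pi_div_three]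
  ring

theorem Function.periodic_of_sum_range_shift_eq_zero {α G : Type*} [Ring α] [AddCommGroup G]
    {f : α → G} {c : α} {n : ℕ} (hsum : ∀ x, ∑ k ∈ range n, f (x + k * c) = 0) :
    Periodic f (n * c) := fun x => by
  have htel := sum_range_sub (fun k : ℕ => f (x + k * c)) n
  have hshift : ∀ k : ℕ, x + ↑(k + 1) * c = x + c + k * c := fun k => by push_cast; noncomm_ring
  simp only [hshift, sum_sub_distrib, hsum, sub_zero, Nat.cast_zero, zero_mul, add_zero] at htel
  exact sub_eq_zero.mp htel.symm

section

variable {E : Type*} [NormedAddCommGroup E] [NormedSpace ℝ E]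

theorem Function.Periodic.intervalIntegral_comp_add_right {f : ℝ → E} {T : ℝ}
    (hf : Periodic f T) (s : ℝ) : ∫ x in 0..T, f (x + s) = ∫ x in 0..T, f x := by
  simpa [add_comm] using hf.intervalIntegral_add_eq s 0

theorem Function.Periodic.intervalIntegral_comp_neg {f : ℝ → E} {T : ℝ} (hf : Periodic f T) :
    ∫ x in 0..T, f (-x) = ∫ x in 0..T, f x := by
  simpa [integral_comp_neg] using hf.intervalIntegral_add_eq (-T) 0

theorem intervalIntegral_eq_zero_of_sum_range_shift_eq_zero {f : ℝ → E} {c : ℝ} {n : ℕ}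
    (hf : Continuous f) (hsum : ∀ x, ∑ k ∈ range n, f (x + k * c) = 0) :
    ∫ x in 0..n * c, f x = 0 := by
  have hper := periodic_of_sum_range_shift_eq_zero hsum
  have h : (n : ℝ) • ∫ x in 0..n * c, f x = 0 :=
    calc (n : ℝ) • ∫ x in 0..n * c, f x = ∑ k ∈ range n, ∫ x in 0..n * c, f (x + k * c) := by
          simp [hper.intervalIntegral_comp_add_right, Nat.cast_smul_eq_nsmul]
      _ = ∫ x in 0..n * c, ∑ k ∈ range n, f (x + k * c) :=
          (integral_finsetSum fun k _ =>
            (hf.comp (continuous_add_const _)).intervalIntegrable _ _).symm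
      _ = 0 := by simp [hsum]
  rcases n.eq_zero_or_pos with rfl | hn
  · simp
  · exact (smul_eq_zero.mp h).resolve_left (Nat.cast_ne_zero.mpr hn.ne')

theorem Function.Antiperiodic.intervalIntegral_eq_zero {f : ℝ → E} {c : ℝ}
    (hf : Antiperiodic f c) (hcont : Continuous f) : ∫ x in 0..2 * c, f x = 0 := by
  simpa using intervalIntegral_eq_zero_of_sum_range_shift_eq_zero (n := 2) hcont
    fun x => by simp [sum_range_succ, hf x]

end

theorem integral_mul_cos_two_mul_eq_zero_of_periodic {g : ℝ → ℝ} (hg : Periodic g (2 * π / 3))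
    (hcont : Continuous g) : ∫ x in 0..2 * π, g x * cos (2 * x) = 0 := by
  have hsum :
      ∀ x, ∑ k ∈ range 3, g (x + k * (2 * π / 3)) * cos (2 * (x + k * (2 * π / 3))) = 0 := by
    intro x
    have hg2 : g (x + 2 * (2 * π / 3)) = g x := by rw [two_mul, ← add_assoc, hg, hg]
    have h1 : 2 * (x + 2 * π / 3) = 2 * x + 4 * π / 3 := by ring
    have h2 : 2 * (x + 2 * (2 * π / 3)) = 2 * x + 2 * π / 3 + 2 * π := by ring
    simp only [sum_range_succ, sum_range_zero, Nat.cast_zero, Nat.cast_one, Nat.cast_ofNat,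
      zero_mul, one_mul, add_zero, zero_add, hg x, hg2, h1, h2, cos_add_two_pi]
    linear_combination g x * cos_add_cos_add_two_pi_div_three_add_cos_add_four_pi_div_three (2 * x)
  have h := intervalIntegral_eq_zero_of_sum_range_shift_eq_zero
    (by fun_prop : Continuous fun x => g x * cos (2 * x)) hsum
  rwa [show ((3 : ℕ) : ℝ) * (2 * π / 3) = 2 * π by push_cast; ring] at h

theorem integral_comp_cos_three_mul_mul_eq_zero (α β γ : ℝ) {h : ℝ → ℝ} (hh : Continuous h) :
    ∫ θ in 0..2 * π, h (cos (3 * θ)) *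
      (2 * α * cos (2 * θ) - 2 * β * sin (2 * θ) - 6 * γ * sin (6 * θ)) = 0 := by
  set f : ℝ → ℝ := fun θ => h (cos (3 * θ)) *
    (2 * α * cos (2 * θ) - 2 * β * sin (2 * θ) - 6 * γ * sin (6 * θ))
  have hper : Periodic f (2 * π) := fun x => by
    simp only [f, cos_ofNat_mul_add_two_pi, sin_ofNat_mul_add_two_pi]
  have hcont : Continuous f := by fun_prop
  have heven : ∀ x, f x + f (-x) = 4 * α * (h (cos (3 * x)) * cos (2 * x)) := fun x => by
    simp only [f, mul_neg, cos_neg, sin_neg]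
    ring
  have hP : Periodic (fun x => h (cos (3 * x))) (2 * π / 3) := fun x => by
    simp [mul_add, mul_div_cancel₀]
  calc ∫ x in 0..2 * π, f x = (∫ x in 0..2 * π, (f x + f (-x))) / 2 := by
        rw [integral_add (hcont.intervalIntegrable _ _)
          ((hcont.comp' continuous_neg).intervalIntegrable _ _), hper.intervalIntegral_comp_neg]
        ring
    _ = 0 := by
        simp only [heven, integral_const_mul,
          integral_mul_cos_two_mul_eq_zero_of_periodic hP (by fun_prop), mul_zero, zero_div]

theorem integral_comp_mul_sin_three_mul_eq_zero (α β γ : ℝ) {h : ℝ → ℝ} (hh : Continuous h) :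
    ∫ θ in 0..2 * π, h (α * sin (2 * θ) + β * cos (2 * θ) + γ * cos (6 * θ)) *
      (-3 * sin (3 * θ)) = 0 :=
  Antiperiodic.intervalIntegral_eq_zero
    (fun x => by norm_num [cos_ofNat_mul_add_pi, sin_ofNat_mul_add_pi]) (by fun_prop)

theorem cgm_example_moments_vanish (α β γ : ℝ) :
    ∀ i : ℕ,
      (∫ θ in (0:ℝ)..(2 * π),
          (Real.cos (3 * θ)) ^ i *
            (2 * α * Real.cos (2 * θ) - 2 * β * Real.sin (2 * θ)
              - 6 * γ * Real.sin (6 * θ)) = 0) ∧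
      (∫ θ in (0:ℝ)..(2 * π),
          (α * Real.sin (2 * θ) + β * Real.cos (2 * θ) + γ * Real.cos (6 * θ)) ^ i *
            (-3 * Real.sin (3 * θ)) = 0) := fun i =>
  ⟨integral_comp_cos_three_mul_mul_eq_zero α β γ (continuous_pow i),
    integral_comp_mul_sin_three_mul_eq_zero α β γ (continuous_pow i)⟩
end

section
/- Let d₁, d₂ > 1 be coprime with d₁ odd, P(θ) = cos(d₁θ), and Q(θ) a trigonometric polynomial of the form Σ_{l} (c_l cos(l d₂ θ) + f_l sin(l d₂ θ)) with c_l = f_l = 0 whenever d₁ ∣ l. For any real polynomial R set Q̃(θ) = Q(θ) + R(cos(d₂θ)). Then ∫_0^{2π} Q̃(θ)^i P'(θ) dθ = 0 for all i ≥ 0. -/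
/-!
Q̃ is a 2π-periodic function of d₂θ, so it is invariant under θ ↦ θ + 2π/d₂, whereas this shift
multiplies e^{i d₁ θ} by the d₂-th root of unity e^{2πi d₁/d₂}, which is ≠ 1 as d₂ ∤ d₁. Hence the integral of
Q̃^i e^{i d₁ θ} over a period equals its own multiple by a number ≠ 1 and vanishes; its
imaginary part, up to the factor -d₁, is the integral of Q̃^i P'.
-/

open Real intervalIntegral

theorem Function.Periodic.intervalIntegral_eq_zero_of_add_eq_smul
    {𝕜 E : Type*} [NormedDivisionRing 𝕜] [NormedAddCommGroup E] [NormedSpace ℝ E]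
    [Module 𝕜 E] [NormSMulClass 𝕜 E] [SMulCommClass ℝ 𝕜 E]
    {F : ℝ → E} {p T : ℝ} {ζ : 𝕜} (hF : Function.Periodic F p) (hζ : ζ ≠ 1)
    (hshift : ∀ x, F (x + T) = ζ • F x) (a : ℝ) :
    ∫ x in a..a + p, F x = 0 := by
  have h : (ζ - 1) • ∫ x in a..a + p, F x = 0 := by
    rw [sub_smul, one_smul, sub_eq_zero]
    calc ζ • ∫ x in a..a + p, F x = ∫ x in a + T..a + T + p, F x := by
          simp only [← integral_smul, ← hshift, integral_comp_add_right, add_right_comm]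
      _ = ∫ x in a..a + p, F x := hF.intervalIntegral_add_eq _ _
  exact (smul_eq_zero.mp h).resolve_left (sub_ne_zero.mpr hζ)

theorem integral_comp_nat_mul_mul_sin_eq_zero {G : ℝ → ℝ} (hG : Function.Periodic G (2 * π))
    (hGc : Continuous G) {m n : ℕ} (hn : n ≠ 0) (hnm : ¬ n ∣ m) :
    ∫ θ in (0 : ℝ)..2 * π, G (n * θ) * sin (m * θ) = 0 := by
  set F : ℝ → ℂ := fun θ => G (n * θ) * Complex.exp ((m * θ : ℝ) * Complex.I)
  set ω : ℂ := Complex.exp (2 * π * Complex.I / n)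
  have hω : ω ^ m ≠ 1 := by
    rwa [Ne, (Complex.isPrimitiveRoot_exp n hn).pow_eq_one_iff_dvd]
  have hFper : Function.Periodic F (2 * π) := by
    intro θ
    have hG' : G (n * (θ + 2 * π)) = G (n * θ) := by
      rw [mul_add]; exact (hG.nat_mul n) _
    have hexp : Complex.exp ((m * (θ + 2 * π) : ℝ) * Complex.I)
        = Complex.exp ((m * θ : ℝ) * Complex.I) := by
      rw [mul_add, Complex.ofReal_add, add_mul, Complex.exp_add, mul_right_eq_self₀]
      left
      convert Complex.exp_nat_mul_two_pi_mul_I m using 2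
      push_cast; ring
    simp only [F, hG', hexp]
  have hFshift : ∀ θ, F (θ + 2 * π / n) = ω ^ m • F θ := by
    intro θ
    have hG' : G (n * (θ + 2 * π / n)) = G (n * θ) := by
      rw [mul_add, mul_div_cancel₀ _ (by positivity)]; exact hG _
    have hexp : Complex.exp ((m * (θ + 2 * π / n) : ℝ) * Complex.I)
        = ω ^ m * Complex.exp ((m * θ : ℝ) * Complex.I) := by
      rw [← Complex.exp_nat_mul, ← Complex.exp_add]; congr 1; push_cast; ring
    simp only [F, hG', hexp, smul_eq_mul]
    ring
  have hFint : IntervalIntegrable F MeasureTheory.volume 0 (2 * π) :=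
    (by fun_prop : Continuous F).intervalIntegrable _ _
  have hF0 := hFper.intervalIntegral_eq_zero_of_add_eq_smul hω hFshift 0
  rw [zero_add] at hF0
  have him := congrArg Complex.im hF0
  rw [← Complex.imCLM_apply, ← ContinuousLinearMap.intervalIntegral_comp_comm _ hFint] at him
  simpa only [F, Complex.imCLM_apply, Complex.im_ofReal_mul, Complex.exp_ofReal_mul_I_im,
    Complex.zero_im] using him

theorem modified_Q_moments_vanish_general
    (d₁ d₂ : ℕ) (hd₂ : 1 < d₂)
    (hcop : Nat.Coprime d₁ d₂)
    (r : ℕ) (c f : ℕ → ℝ)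
    (R : Polynomial ℝ) :
    ∀ i : ℕ,
      ∫ θ in (0:ℝ)..(2 * π),
        ((∑ l ∈ Finset.range (r + 1),
            (c l * Real.cos (l * d₂ * θ) + f l * Real.sin (l * d₂ * θ)))
          + R.eval (Real.cos (d₂ * θ))) ^ i *
        (-(d₁ : ℝ) * Real.sin (d₁ * θ)) = 0 := by
  intro i
  set G : ℝ → ℝ := fun x =>
    (∑ l ∈ Finset.range (r + 1), (c l * cos (l * x) + f l * sin (l * x))) + R.eval (cos x)
  have hG : Function.Periodic G (2 * π) := fun x => by
    simp only [G, mul_add, cos_add_nat_mul_two_pi, sin_add_nat_mul_two_pi, cos_add_two_pi]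
  have hGc : Continuous G := by
    have := R.continuous
    fun_prop
  have hGi : Function.Periodic (fun x => G x ^ i) (2 * π) := hG.comp (· ^ i)
  have hd₂d₁ : ¬ d₂ ∣ d₁ := fun h => hd₂.ne' (hcop.symm.eq_one_of_dvd h)
  calc _ = ∫ θ in (0:ℝ)..(2 * π), -(d₁ : ℝ) * ((fun x => G x ^ i) (d₂ * θ) * sin (d₁ * θ)) :=
        integral_congr fun θ _ => by simp only [G, ← mul_assoc]; ring
    _ = 0 := by
      rw [integral_const_mul,
        integral_comp_nat_mul_mul_sin_eq_zero hGi (hGc.pow i) (by omega) hd₂d₁, mul_zero]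

theorem modified_Q_moments_vanish
    (d₁ d₂ : ℕ) (hd₁ : 1 < d₁) (hd₂ : 1 < d₂) (hodd : Odd d₁)
    (hcop : Nat.Coprime d₁ d₂)
    (r : ℕ) (c f : ℕ → ℝ)
    (hQ : ∀ l, d₁ ∣ l → c l = 0 ∧ f l = 0)
    (R : Polynomial ℝ) :
    ∀ i : ℕ,
      ∫ θ in (0:ℝ)..(2 * π),
        ((∑ l ∈ Finset.range (r + 1),
            (c l * Real.cos (l * d₂ * θ) + f l * Real.sin (l * d₂ * θ)))
          + R.eval (Real.cos (d₂ * θ))) ^ i *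
        (-(d₁ : ℝ) * Real.sin (d₁ * θ)) = 0 :=
  modified_Q_moments_vanish_general d₁ d₂ hd₂ hcop r c f R
end

section
/- With P, Q, Q̃ = Q + R ∘ cos(d₂ ·) as above (d₁, d₂ > 1 coprime), ∫_0^{2π} P(θ)^i Q̃'(θ) dθ = 0 for all i ≥ 0; in particular the moment functional Q ↦ ∫_0^{2π} P^i dQ is linear in Q, and both Q and R(cos(d₂θ)) individually give vanishing moments against P = cos(d₁θ). -/
open Real Polynomial intervalIntegral

lemma int_sin_mul (m : ℤ) : ∫ θ in (0:ℝ)..(2*π), Real.sin (m * θ) = 0 := by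
  rcases eq_or_ne m 0 with h | h
  · simp [h]
  · have hm : (m:ℝ) ≠ 0 := Int.cast_ne_zero.mpr h
    rw [intervalIntegral.integral_comp_mul_left Real.sin hm, integral_sin]
    simp [Real.cos_int_mul_two_pi]

lemma int_cos_mul (m : ℤ) (hm : m ≠ 0) : ∫ θ in (0:ℝ)..(2*π), Real.cos (m * θ) = 0 := by
  have hm' : (m:ℝ) ≠ 0 := Int.cast_ne_zero.mpr hm
  rw [intervalIntegral.integral_comp_mul_left Real.cos hm', integral_cos,
    show (m:ℝ)*(2*π) = ((2*m:ℤ):ℝ)*π from by push_cast; ring, Real.sin_int_mul_pi]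
  simp

lemma contII {f : ℝ → ℝ} (hf : Continuous f) :
    IntervalIntegrable f MeasureTheory.volume 0 (2*π) :=
  hf.intervalIntegrable 0 (2*π)

lemma int_cospow_sin (b : ℤ) : ∀ (j : ℕ) (m : ℤ),
    (∫ θ in (0:ℝ)..(2*π), Real.cos (b*θ)^j * Real.sin (m*θ)) = 0 := by
  intro j
  induction j with
  | zero => intro m; simpa using int_sin_mul m
  | succ j ih =>
    intro m
    have heq : (fun θ : ℝ => Real.cos (b*θ)^(j+1) * Real.sin (m*θ))
        = fun θ => (1/2) * (Real.cos (b*θ)^j * Real.sin (((m+b):ℤ)*θ)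
           + Real.cos (b*θ)^j * Real.sin (((m-b):ℤ)*θ)) := by
      funext θ
      rw [show ((m+b:ℤ):ℝ)*θ = m*θ + b*θ from by push_cast; ring,
        show ((m-b:ℤ):ℝ)*θ = m*θ - b*θ from by push_cast; ring,
        Real.sin_add, Real.sin_sub]
      ring
    rw [heq, intervalIntegral.integral_const_mul,
      intervalIntegral.integral_add (contII (by fun_prop)) (contII (by fun_prop)), ih, ih]
    ring

lemma int_cospow_cospow_sin (a b : ℤ) : ∀ (i : ℕ) (m : ℤ) (j : ℕ),
    (∫ θ in (0:ℝ)..(2*π), Real.cos (a*θ)^i * (Real.cos (b*θ)^j * Real.sin (m*θ))) = 0 := by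
  intro i
  induction i with
  | zero => intro m j; simpa using int_cospow_sin b j m
  | succ i ih =>
    intro m j
    have heq : (fun θ : ℝ => Real.cos (a*θ)^(i+1) * (Real.cos (b*θ)^j * Real.sin (m*θ)))
        = fun θ => (1/2) * (Real.cos (a*θ)^i * (Real.cos (b*θ)^j * Real.sin (((m+a):ℤ)*θ))
           + Real.cos (a*θ)^i * (Real.cos (b*θ)^j * Real.sin (((m-a):ℤ)*θ))) := by
      funext θ
      rw [show ((m+a:ℤ):ℝ)*θ = m*θ + a*θ from by push_cast; ring,
        show ((m-a:ℤ):ℝ)*θ = m*θ - a*θ from by push_cast; ring,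
        Real.sin_add, Real.sin_sub]
      ring
    rw [heq, intervalIntegral.integral_const_mul,
      intervalIntegral.integral_add (contII (by fun_prop)) (contII (by fun_prop)), ih, ih]
    ring

lemma int_cospow_cos (a : ℤ) : ∀ (i : ℕ) (m : ℤ), ¬ a ∣ m →
    (∫ θ in (0:ℝ)..(2*π), Real.cos (a*θ)^i * Real.cos (m*θ)) = 0 := by
  intro i
  induction i with
  | zero =>
    intro m hm
    have : m ≠ 0 := by rintro rfl; exact hm (dvd_zero a)
    simpa using int_cos_mul m this
  | succ i ih =>
    intro m hm
    have heq : (fun θ : ℝ => Real.cos (a*θ)^(i+1) * Real.cos (m*θ))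
        = fun θ => (1/2) * (Real.cos (a*θ)^i * Real.cos (((m+a):ℤ)*θ)
           + Real.cos (a*θ)^i * Real.cos (((m-a):ℤ)*θ)) := by
      funext θ
      rw [show ((m+a:ℤ):ℝ)*θ = m*θ + a*θ from by push_cast; ring,
        show ((m-a:ℤ):ℝ)*θ = m*θ - a*θ from by push_cast; ring,
        Real.cos_add, Real.cos_sub]
      ring
    have h1 : ¬ a ∣ (m + a) := fun h => hm (by simpa using h.sub (dvd_refl a))
    have h2 : ¬ a ∣ (m - a) := fun h => hm (by simpa using h.add (dvd_refl a))
    rw [heq, intervalIntegral.integral_const_mul,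
      intervalIntegral.integral_add (contII (by fun_prop)) (contII (by fun_prop)),
      ih _ h1, ih _ h2]
    ring

theorem modified_Q_reverse_moments_vanish
    (d₁ d₂ : ℕ) (hd₁ : 1 < d₁) (hd₂ : 1 < d₂) (hcop : Nat.Coprime d₁ d₂)
    (r : ℕ) (c f : ℕ → ℝ)
    (hQ : ∀ l, d₁ ∣ l → c l = 0 ∧ f l = 0)
    (R : Polynomial ℝ) :
    ∀ i : ℕ,
      ∫ θ in (0:ℝ)..(2 * π),
        (Real.cos (d₁ * θ)) ^ i *
        ((∑ l ∈ Finset.range (r + 1),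
            (-(c l) * (l * d₂) * Real.sin (l * d₂ * θ)
              + f l * (l * d₂) * Real.cos (l * d₂ * θ)))
          + (Polynomial.derivative R).eval (Real.cos (d₂ * θ)) *
              (-(d₂ : ℝ) * Real.sin (d₂ * θ))) = 0 := by
  intro i
  set S := Polynomial.derivative R with hS
  set N := S.natDegree + 1 with hN
  -- specialized vanishing lemmas
  have key1 : ∀ l : ℕ, (∫ θ in (0:ℝ)..(2*π),
      Real.cos (d₁*θ)^i * Real.sin ((l:ℝ)*(d₂:ℝ)*θ)) = 0 := by
    intro l
    have := int_cospow_cospow_sin (d₁:ℤ) 0 i ((l*d₂ : ℕ):ℤ) 0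
    push_cast at this
    simpa [mul_assoc] using this
  have key2 : ∀ l : ℕ, ¬ d₁ ∣ l → (∫ θ in (0:ℝ)..(2*π),
      Real.cos (d₁*θ)^i * Real.cos ((l:ℝ)*(d₂:ℝ)*θ)) = 0 := by
    intro l hl
    have hdvd : ¬ ((d₁:ℤ) ∣ ((l*d₂:ℕ):ℤ)) := by
      rw [Int.natCast_dvd_natCast]
      intro h
      exact hl (Nat.Coprime.dvd_of_dvd_mul_right hcop h)
    have := int_cospow_cos (d₁:ℤ) i ((l*d₂:ℕ):ℤ) hdvd
    push_cast at this
    simpa [mul_assoc] using this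
  have key3 : ∀ n : ℕ, (∫ θ in (0:ℝ)..(2*π),
      Real.cos (d₁*θ)^i * (Real.cos ((d₂:ℝ)*θ)^n * Real.sin ((d₂:ℝ)*θ))) = 0 := by
    intro n
    have := int_cospow_cospow_sin (d₁:ℤ) (d₂:ℤ) i (d₂:ℤ) n
    push_cast at this
    exact this
  have heq : (fun θ : ℝ => (Real.cos (d₁ * θ)) ^ i *
        ((∑ l ∈ Finset.range (r + 1),
            (-(c l) * (l * d₂) * Real.sin (l * d₂ * θ)
              + f l * (l * d₂) * Real.cos (l * d₂ * θ)))
          + S.eval (Real.cos (d₂ * θ)) * (-(d₂ : ℝ) * Real.sin (d₂ * θ))))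
      = fun θ : ℝ =>
        (∑ l ∈ Finset.range (r + 1),
          ((-(c l) * (l * d₂)) * (Real.cos (d₁*θ)^i * Real.sin ((l:ℝ)*(d₂:ℝ)*θ))
            + (f l * (l * d₂)) * (Real.cos (d₁*θ)^i * Real.cos ((l:ℝ)*(d₂:ℝ)*θ))))
        + ∑ n ∈ Finset.range N,
            ((S.coeff n * (-(d₂:ℝ))) *
              (Real.cos (d₁*θ)^i * (Real.cos ((d₂:ℝ)*θ)^n * Real.sin ((d₂:ℝ)*θ)))) := by
    funext θ
    rw [Polynomial.eval_eq_sum_range, mul_add, Finset.mul_sum]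
    congr 1
    · exact Finset.sum_congr rfl (fun l _ => by ring)
    · rw [Finset.sum_mul, Finset.mul_sum]
      exact Finset.sum_congr rfl (fun n _ => by ring)
  rw [heq, intervalIntegral.integral_add
      (contII (by fun_prop)) (contII (by fun_prop)),
    intervalIntegral.integral_finset_sum (fun l _ => contII (by fun_prop)),
    intervalIntegral.integral_finset_sum (fun n _ => contII (by fun_prop))]
  have hz1 : ∀ l ∈ Finset.range (r+1),
      (∫ θ in (0:ℝ)..(2*π),
        ((-(c l) * (l * d₂)) * (Real.cos (d₁*θ)^i * Real.sin ((l:ℝ)*(d₂:ℝ)*θ))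
          + (f l * (l * d₂)) * (Real.cos (d₁*θ)^i * Real.cos ((l:ℝ)*(d₂:ℝ)*θ)))) = 0 := by
    intro l _
    rw [intervalIntegral.integral_add (contII (by fun_prop)) (contII (by fun_prop)),
      intervalIntegral.integral_const_mul, intervalIntegral.integral_const_mul,
      key1 l]
    rcases Decidable.em (d₁ ∣ l) with h | h
    · rw [(hQ l h).2]; ring
    · rw [key2 l h]; ring
  have hz2 : ∀ n ∈ Finset.range N,
      (∫ θ in (0:ℝ)..(2*π),
        ((S.coeff n * (-(d₂:ℝ))) *
          (Real.cos (d₁*θ)^i * (Real.cos ((d₂:ℝ)*θ)^n * Real.sin ((d₂:ℝ)*θ))))) = 0 := by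
    intro n _
    rw [intervalIntegral.integral_const_mul, key3 n]; ring
  rw [Finset.sum_congr rfl hz1, Finset.sum_congr rfl hz2]
  simp
end

section
/- Let a = -√3/2, b = √3/2, and let Q = S₁ ∘ T₂ + S₂ ∘ T₃ for arbitrary real polynomials S₁, S₂. Then ∫_a^b T₆(x)^i Q'(x) dx = 0 for all i ≥ 0. -/
/-!
Since `T₆ = T₃ ∘ T₂ = T₂ ∘ T₃`, each summand of the integrand has the shape
`(P ∘ q) · q'` with `q = T₂` or `q = T₃`. Substituting `u = q x` turns its integral into
`∫ P` over `[q(-√3/2), q(√3/2)]`, a degenerate interval because `T₂` is even and `T₃`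
vanishes at `±√3/2`.
-/

open Polynomial intervalIntegral

namespace Polynomial

theorem integral_eval_comp_mul_eval_derivative_eq_zero (P q : ℝ[X]) {a b : ℝ}
    (h : q.eval a = q.eval b) :
    ∫ x in a..b, (P.comp q).eval x * q.derivative.eval x = 0 := by
  simpa only [Function.comp_apply, eval_comp, h, integral_same] using
    integral_comp_mul_deriv (a := a) (b := b) (f := fun x ↦ q.eval x) (g := fun u ↦ P.eval u)
      (fun x _ ↦ q.hasDerivAt x) q.derivative.continuous.continuousOn P.continuous

theorem integral_pow_mul_eval_derivative_comp_eq_zero {T R q : ℝ[X]} (hT : T = R.comp q)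
    {a b : ℝ} (h : q.eval a = q.eval b) (S : ℝ[X]) (i : ℕ) :
    ∫ x in a..b, (T.eval x) ^ i * (S.comp q).derivative.eval x = 0 := by
  have hintegrand : ∀ x, (T.eval x) ^ i * (S.comp q).derivative.eval x =
      ((R ^ i * S.derivative).comp q).eval x * q.derivative.eval x := fun x ↦ by
    simp only [hT, derivative_comp, mul_comp, pow_comp, eval_mul, eval_pow, eval_comp]
    ring
  simp only [hintegrand]
  exact integral_eval_comp_mul_eval_derivative_eq_zero _ q h

namespace Chebyshev

theorem T_eval_neg_of_even {R : Type*} [CommRing R] {n : ℤ} (hn : Even n) (x : R) :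
    (T R n).eval (-x) = (T R n).eval x := by
  rw [T_eval_neg, Int.negOnePow_even n hn, Units.val_one, Int.cast_one, one_mul]

theorem T_three_eval_sqrt_three_div_two : (T ℝ 3).eval (√3 / 2) = 0 := by
  rw [← Real.cos_pi_div_six, T_real_cos]
  convert Real.cos_pi_div_two using 2
  push_cast
  ring

end Chebyshev

end Polynomial

open Polynomial.Chebyshev in
theorem T6_zero_space_moments_vanish (S₁ S₂ : Polynomial ℝ) :
    ∀ i : ℕ,
      ∫ x in (-(Real.sqrt 3 / 2))..(Real.sqrt 3 / 2),
        ((Polynomial.Chebyshev.T ℝ 6).eval x) ^ i *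
          (Polynomial.derivative
            (S₁.comp (Polynomial.Chebyshev.T ℝ 2) +
              S₂.comp (Polynomial.Chebyshev.T ℝ 3))).eval x = 0 := by
  intro i
  have hT₂ : (T ℝ 2).eval (-(√3 / 2)) = (T ℝ 2).eval (√3 / 2) :=
    T_eval_neg_of_even (by decide) _
  have hT₃ : (T ℝ 3).eval (-(√3 / 2)) = (T ℝ 3).eval (√3 / 2) := by
    rw [T_eval_neg, T_three_eval_sqrt_three_div_two, mul_zero]
  have hT₆₂ : T ℝ 6 = (T ℝ 3).comp (T ℝ 2) := by rw [← T_mul]; norm_num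
  have hT₆₃ : T ℝ 6 = (T ℝ 2).comp (T ℝ 3) := by rw [← T_mul]; norm_num
  have h₁ := integral_pow_mul_eval_derivative_comp_eq_zero hT₆₂ hT₂ S₁ i
  have h₂ := integral_pow_mul_eval_derivative_comp_eq_zero hT₆₃ hT₃ S₂ i
  simp only [derivative_add, eval_add, mul_add]
  rw [integral_add, h₁, h₂, add_zero] <;>
    exact Continuous.intervalIntegrable (by fun_prop) _ _
end
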